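/- Let L be a real symmetric N×N matrix with pairwise distinct eigenvalues −(ω^{(j)})², where ω^{(j)} > 0, and corresponding nonzero orthogonal eigenvectors u^{(j)}, 1 ≤ j ≤ N. Assume that for every integer k ≥ 2 and every j one has (ω^{(j)})² ≠ k²(ω^{(1)})². Set Q₀(τ) = (u^{(1)}/‖u^{(1)}‖)·2cos τ. Suppose ω₂ ∈ ℝ and Q₂(τ) = Σ_{j=1}^{N} Σ_{k≥1} c_{k,j} (u^{(j)}/‖u^{(j)}‖)·2cos(kτ) (with only finitely many nonzero coefficients and with c_{1,1} = 0) satisfies (ω^{(1)})² Q̈₂(τ) + 2ω^{(1)}ω₂ Q̈₀(τ) = L Q₂(τ) + Q₀(τ)∘Q₀(τ)∘Q₀(τ) for all τ. Then c_{1,j} = 3⟨(u^{(1)})^{∘3}, u^{(j)}⟩ / (‖u^{(1)}‖³ ‖u^{(j)}‖ ((ω^{(j)})² − (ω^{(1)})²)) for every j ≠ 1, c_{3,j} = ⟨(u^{(1)})^{∘3}, u^{(j)}⟩ / (‖u^{(1)}‖³ ‖u^{(j)}‖ ((ω^{(j)})² − 9(ω^{(1)})²)) for every j, and c_{k,j}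 = 0 whenever k ∉ {1, 3}. -/

import Mathlib

/-- Euclidean norm on `Fin N → ℝ`. -/
noncomputable def enormFin {N : ℕ} (v : Fin N → ℝ) : ℝ := Real.sqrt (∑ l, (v l)^2)

/-- The leading mode of the expansion: `Q₀(τ) = (u₁/‖u₁‖)·2cos τ`. -/
noncomputable def Qzero {N : ℕ} (u1 : Fin N → ℝ) (τ : ℝ) : Fin N → ℝ :=
  ((2 * Real.cos τ) / enormFin u1) • u1

/-- The first correction term, expanded in the eigenbasis and temporal harmonics:
`Q₂(τ) = Σ_j Σ_k c_{k,j} (u_j/‖u_j‖)·2cos(kτ)`. -/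
noncomputable def Qtwo {N : ℕ} (u : Fin N → Fin N → ℝ) (c : ℕ → Fin N → ℝ)
    (τ : ℝ) : Fin N → ℝ :=
  ∑ j, ∑ᶠ k : ℕ, ((c k j * (2 * Real.cos ((k : ℝ) * τ))) / enormFin (u j)) • u j

/-! Substituting the cosine expansions of `Q₀` and `Q₂` turns the order-`ε³` equation into a
cosine polynomial in `τ` with vector coefficients that vanishes identically, so by orthogonality of
the `cos (k τ)` on `[0, 2π]` every coefficient vanishes (harmonic balance). Since
`(2 cos τ)³ = 2 cos 3τ + 6 cos τ`, the cubic forcing only reaches the harmonics `1` and `3`.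
Projecting the `k`-th coefficient onto the eigenvector `u⁽ʲ⁾` (using orthogonality and the symmetry
of `L`) gives `2 c_{k,j} ‖u⁽ʲ⁾‖ ((ω⁽ʲ⁾)² - k² (ω⁽¹⁾)²)` = forcing, and the simple, non-resonant
spectrum makes the bracket nonzero. -/

open Real Matrix

section CosinePolynomial

variable {E : Type*} [NormedAddCommGroup E] [NormedSpace ℝ E]

theorem integral_cos_int_mul (n : ℤ) (hn : n ≠ 0) : ∫ τ in 0..2 * π, cos (n * τ) = 0 := by
  rw [intervalIntegral.integral_comp_mul_left cos (by exact_mod_cast hn), integral_cos,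
    show (n : ℝ) * (2 * π) = (2 * n : ℤ) * π by push_cast; ring, sin_int_mul_pi]
  simp

theorem integral_cos_mul_cos_nat_mul (m k : ℕ) (hm : m ≠ 0) :
    ∫ τ in 0..2 * π, cos (m * τ) * cos (k * τ) = if k = m then π else 0 := by
  have hsum (τ : ℝ) : cos (m * τ) * cos (k * τ)
      = (cos ((m + k : ℤ) * τ) + cos ((m - k : ℤ) * τ)) / 2 := by
    push_cast
    rw [add_mul, sub_mul, cos_add, cos_sub]
    ring
  have hint (n : ℤ) :
      IntervalIntegrable (fun τ : ℝ => cos (n * τ)) MeasureTheory.volume 0 (2 * π) :=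
    (continuous_cos.comp (continuous_const_mul _)).intervalIntegrable _ _
  simp_rw [hsum, intervalIntegral.integral_div, intervalIntegral.integral_add (hint _) (hint _),
    integral_cos_int_mul (m + k) (by omega)]
  split_ifs with hkm
  · simp [hkm]
  · rw [integral_cos_int_mul (m - k) (by omega)]
    simp

noncomputable def cosPoly (K : Finset ℕ) (τ : ℝ) : (ℕ → E) →ₗ[ℝ] E :=
  ∑ k ∈ K, cos (k * τ) • LinearMap.proj k

@[simp]
theorem cosPoly_apply (K : Finset ℕ) (τ : ℝ) (w : ℕ → E) :
    cosPoly K τ w = ∑ k ∈ K, cos (k * τ) • w k := by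
  simp [cosPoly]

theorem cosPoly_ite_eq {K : Finset ℕ} {m : ℕ} (hm : m ∈ K) (τ : ℝ) (v : E) :
    cosPoly K τ (fun k => if k = m then v else 0) = cos (m * τ) • v := by
  simp [hm]

theorem map_cosPoly {F : Type*} [NormedAddCommGroup F] [NormedSpace ℝ F] (f : E →ₗ[ℝ] F)
    (K : Finset ℕ) (τ : ℝ) (w : ℕ → E) : f (cosPoly K τ w) = cosPoly K τ (fun k => f (w k)) := by
  simp [map_sum]

theorem hasDerivAt_cosPoly (K : Finset ℕ) (w : ℕ → E) (τ : ℝ) :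
    HasDerivAt (fun t => cosPoly K t w) (∑ k ∈ K, sin (k * τ) • -(k : ℝ) • w k) τ := by
  simp only [cosPoly_apply]
  refine HasDerivAt.fun_sum fun k _ => ?_
  convert (((hasDerivAt_id' τ).const_mul (k : ℝ)).cos).smul_const (w k) using 1
  module

theorem hasDerivAt_sum_sin_smul (K : Finset ℕ) (w : ℕ → E) (τ : ℝ) :
    HasDerivAt (fun t => ∑ k ∈ K, sin (k * t) • w k) (cosPoly K τ fun k => (k : ℝ) • w k) τ := by
  rw [cosPoly_apply]
  refine HasDerivAt.fun_sum fun k _ => ?_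
  convert (((hasDerivAt_id' τ).const_mul (k : ℝ)).sin).smul_const (w k) using 1
  module

theorem deriv_deriv_cosPoly (K : Finset ℕ) (w : ℕ → E) (τ : ℝ) :
    deriv (deriv fun t => cosPoly K t w) τ = cosPoly K τ fun k => -(k : ℝ) ^ 2 • w k := by
  have hderiv : deriv (fun t => cosPoly K t w) = fun t => ∑ k ∈ K, sin (k * t) • -(k : ℝ) • w k :=
    funext fun t => (hasDerivAt_cosPoly K w t).deriv
  rw [hderiv, (hasDerivAt_sum_sin_smul K _ τ).deriv]
  congr 1
  funext k
  module

theorem coeff_eq_zero_of_cosPoly_eq_zero [CompleteSpace E] {K : Finset ℕ} {w : ℕ → E}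
    (h : ∀ τ, cosPoly K τ w = 0) {m : ℕ} (hm : m ∈ K) (hm0 : m ≠ 0) : w m = 0 := by
  have hint (k : ℕ) : IntervalIntegrable (fun τ : ℝ => (cos (m * τ) * cos (k * τ)) • w k)
      MeasureTheory.volume 0 (2 * π) :=
    Continuous.intervalIntegrable (by fun_prop) _ _
  have key : ∫ τ in 0..2 * π, cos (m * τ) • cosPoly K τ w = π • w m := by
    simp_rw [cosPoly_apply, Finset.smul_sum, smul_smul]
    rw [intervalIntegral.integral_finsetSum fun k _ => hint k]
    simp_rw [intervalIntegral.integral_smul_const, integral_cos_mul_cos_nat_mul m _ hm0, ite_smul,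
      zero_smul, Finset.sum_ite_eq', if_pos hm]
  simpa [h, pi_ne_zero] using key.symm

end CosinePolynomial

section OrthogonalExpansion

variable {ι n : Type*} [Fintype ι] [Fintype n]

theorem enormFin_eq_sqrt_dotProduct {N : ℕ} (v : Fin N → ℝ) : enormFin v = √(v ⬝ᵥ v) := by
  simp [enormFin, dotProduct, sq]

theorem enormFin_sq {N : ℕ} (v : Fin N → ℝ) : enormFin v ^ 2 = v ⬝ᵥ v := by
  rw [enormFin_eq_sqrt_dotProduct,
    sq_sqrt (show 0 ≤ v ⬝ᵥ v from Finset.sum_nonneg fun l _ => mul_self_nonneg (v l))]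

theorem enormFin_pos {N : ℕ} {v : Fin N → ℝ} (hv : v ≠ 0) : 0 < enormFin v := by
  rw [enormFin_eq_sqrt_dotProduct, sqrt_pos]
  exact (Finset.sum_nonneg fun l _ => mul_self_nonneg (v l)).lt_of_ne'
    (dotProduct_self_eq_zero.not.mpr hv)

theorem sum_smul_dotProduct_of_orthogonal {u : ι → n → ℝ}
    (horth : ∀ i j, i ≠ j → u i ⬝ᵥ u j = 0) (a : ι → ℝ) (j : ι) :
    (∑ i, a i • u i) ⬝ᵥ u j = a j * (u j ⬝ᵥ u j) := by
  rw [sum_dotProduct, Finset.sum_eq_single j (fun i _ hij => by rw [smul_dotProduct, horth i j hij,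
    smul_zero]) (by simp), smul_dotProduct, smul_eq_mul]

theorem sum_div_enormFin_smul_dotProduct {N : ℕ} {u : ι → Fin N → ℝ}
    (horth : ∀ i j, i ≠ j → u i ⬝ᵥ u j = 0) (a : ι → ℝ) {j : ι} (hj : u j ≠ 0) :
    (∑ i, (a i / enormFin (u i)) • u i) ⬝ᵥ u j = a j * enormFin (u j) := by
  rw [sum_smul_dotProduct_of_orthogonal horth, ← enormFin_sq]
  field_simp [(enormFin_pos hj).ne']

theorem mulVec_dotProduct_of_isSymm {R : Type*} [CommRing R] {L : Matrix n n R} (hL : L.IsSymm)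
    {v w : n → R} {μ : R} (hw : L *ᵥ w = μ • w) : (L *ᵥ v) ⬝ᵥ w = μ * (v ⬝ᵥ w) := by
  rw [dotProduct_comm, dotProduct_mulVec, ← mulVec_transpose, hL.eq, hw, smul_dotProduct,
    smul_eq_mul, dotProduct_comm]

end OrthogonalExpansion

theorem exists_finset_forall_notMem_eq_zero {α ι M : Type*} [Finite ι] [Zero M] {c : α → ι → M}
    (hc : ∀ j, (Function.support fun k => c k j).Finite) (s : Finset α) :
    ∃ K : Finset α, s ⊆ K ∧ ∀ k ∉ K, ∀ j, c k j = 0 := by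
  classical
  have hfin : (⋃ j, Function.support fun k => c k j).Finite := Set.finite_iUnion hc
  refine ⟨s ∪ hfin.toFinset, Finset.subset_union_left, fun k hk j => ?_⟩
  by_contra h
  exact hk (Finset.mem_union_right _ (hfin.mem_toFinset.mpr (Set.mem_iUnion.mpr ⟨j, h⟩)))

/-- The `k`-th temporal Fourier coefficient of `Qtwo u c`. -/
noncomputable def QtwoCoeff {N : ℕ} (u : Fin N → Fin N → ℝ) (c : ℕ → Fin N → ℝ) (k : ℕ) :
    Fin N → ℝ :=
  ∑ j, (2 * c k j / enormFin (u j)) • u j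

theorem Qtwo_eq_cosPoly {N : ℕ} (u : Fin N → Fin N → ℝ) {c : ℕ → Fin N → ℝ} {K : Finset ℕ}
    (hK : ∀ k ∉ K, ∀ j, c k j = 0) (τ : ℝ) : Qtwo u c τ = cosPoly K τ (QtwoCoeff u c) := by
  have hfin (j : Fin N) : ∑ᶠ k : ℕ, ((c k j * (2 * cos (k * τ))) / enormFin (u j)) • u j
      = ∑ k ∈ K, ((c k j * (2 * cos (k * τ))) / enormFin (u j)) • u j :=
    finsum_eq_sum_of_support_subset _ fun k hk => by
      by_contra hkK
      simp [hK k hkK j] at hk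
  simp only [Qtwo, hfin, cosPoly_apply, QtwoCoeff, Finset.smul_sum, smul_smul]
  rw [Finset.sum_comm]
  congr! 3
  ring

theorem Qzero_eq_cosPoly {N : ℕ} (u₁ : Fin N → ℝ) {K : Finset ℕ} (hK : 1 ∈ K) (τ : ℝ) :
    Qzero u₁ τ = cosPoly K τ (fun k => if k = 1 then (2 / enormFin u₁) • u₁ else 0) := by
  rw [cosPoly_ite_eq hK, Qzero, smul_smul, Nat.cast_one, one_mul]
  congr 1
  ring

theorem Qzero_cube_eq_cosPoly {N : ℕ} (u₁ : Fin N → ℝ) {K : Finset ℕ} (h1 : 1 ∈ K) (h3 : 3 ∈ K)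
    (τ : ℝ) : (fun l => Qzero u₁ τ l ^ 3) = cosPoly K τ
      ((fun k => if k = 1 then (6 / enormFin u₁ ^ 3) • u₁ ^ 3 else 0)
        + fun k => if k = 3 then (2 / enormFin u₁ ^ 3) • u₁ ^ 3 else 0) := by
  rw [map_add, cosPoly_ite_eq h1, cosPoly_ite_eq h3]
  funext l
  simp only [Qzero, Pi.add_apply, Pi.smul_apply, Pi.pow_apply, smul_eq_mul]
  push_cast
  rw [one_mul, cos_three_mul]
  ring

theorem harmonic_balance {N : ℕ} (L : Matrix (Fin N) (Fin N) ℝ) {u : Fin N → Fin N → ℝ}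
    {u₁ : Fin N → ℝ} {ω₁ ω₂ : ℝ} {c : ℕ → Fin N → ℝ}
    (hcfin : ∀ j, (Function.support fun k => c k j).Finite)
    (heq : ∀ τ, ω₁ ^ 2 • deriv (deriv (Qtwo u c)) τ + (2 * ω₁ * ω₂) • deriv (deriv (Qzero u₁)) τ
      = L *ᵥ Qtwo u c τ + fun l => Qzero u₁ τ l ^ 3)
    {k : ℕ} (hk0 : k ≠ 0) :
    ω₁ ^ 2 • -(k : ℝ) ^ 2 • QtwoCoeff u c k
        + (2 * ω₁ * ω₂) • -(k : ℝ) ^ 2 • (if k = 1 then (2 / enormFin u₁) • u₁ else 0)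
      = L *ᵥ QtwoCoeff u c k + (if k = 1 then (6 / enormFin u₁ ^ 3) • u₁ ^ 3 else 0)
          + (if k = 3 then (2 / enormFin u₁ ^ 3) • u₁ ^ 3 else 0) := by
  obtain ⟨K, hsK, hKc⟩ := exists_finset_forall_notMem_eq_zero hcfin {1, 3, k}
  have hK1 : 1 ∈ K := hsK (by simp)
  have hK3 : 3 ∈ K := hsK (by simp)
  set P : ℕ → Fin N → ℝ := fun k => if k = 1 then (2 / enormFin u₁) • u₁ else 0
  set C₁ : ℕ → Fin N → ℝ := fun k => if k = 1 then (6 / enormFin u₁ ^ 3) • u₁ ^ 3 else 0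
  set C₃ : ℕ → Fin N → ℝ := fun k => if k = 3 then (2 / enormFin u₁ ^ 3) • u₁ ^ 3 else 0
  rw [← sub_eq_zero]
  refine coeff_eq_zero_of_cosPoly_eq_zero
    (w := ω₁ ^ 2 • (fun k : ℕ => -(k : ℝ) ^ 2 • QtwoCoeff u c k)
      + (2 * ω₁ * ω₂) • (fun k : ℕ => -(k : ℝ) ^ 2 • P k)
      - ((fun k : ℕ => L *ᵥ QtwoCoeff u c k) + C₁ + C₃))
    (fun τ => ?_) (hsK (by simp)) hk0
  have h := heq τ
  rw [Qzero_cube_eq_cosPoly u₁ hK1 hK3, Qtwo_eq_cosPoly u hKc τ, ← Matrix.mulVecLin_apply,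
    map_cosPoly, funext (Qtwo_eq_cosPoly u hKc), funext (Qzero_eq_cosPoly u₁ hK1),
    deriv_deriv_cosPoly, deriv_deriv_cosPoly] at h
  simp only [map_sub, map_add, map_smul, Matrix.mulVecLin_apply, P, C₁, C₃] at h ⊢
  linear_combination (norm := module) h

theorem modal_harmonic_balance {N : ℕ} {L : Matrix (Fin N) (Fin N) ℝ} (hL : L.IsSymm)
    {ω : Fin N → ℝ} {u : Fin N → Fin N → ℝ} (hune : ∀ j, u j ≠ 0)
    (horthog : ∀ i j, i ≠ j → u i ⬝ᵥ u j = 0) (heig : ∀ j, L *ᵥ u j = (-ω j ^ 2) • u j)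
    {u₁ : Fin N → ℝ} {ω₁ ω₂ : ℝ} {c : ℕ → Fin N → ℝ}
    (hcfin : ∀ j, (Function.support fun k => c k j).Finite)
    (heq : ∀ τ, ω₁ ^ 2 • deriv (deriv (Qtwo u c)) τ + (2 * ω₁ * ω₂) • deriv (deriv (Qzero u₁)) τ
      = L *ᵥ Qtwo u c τ + fun l => Qzero u₁ τ l ^ 3)
    {k : ℕ} (hk0 : k ≠ 0) (j : Fin N) :
    2 * c k j * enormFin (u j) * (ω j ^ 2 - k ^ 2 * ω₁ ^ 2)
      = (if k = 1 then 4 * ω₁ * ω₂ * (u₁ ⬝ᵥ u j) / enormFin u₁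
          + 6 * (∑ l, u₁ l ^ 3 * u j l) / enormFin u₁ ^ 3 else 0)
        + (if k = 3 then 2 * (∑ l, u₁ l ^ 3 * u j l) / enormFin u₁ ^ 3 else 0) := by
  have h := congrArg (· ⬝ᵥ u j) (harmonic_balance L hcfin heq hk0)
  have hcube : (u₁ ^ 3) ⬝ᵥ u j = ∑ l, u₁ l ^ 3 * u j l := rfl
  simp only [add_dotProduct, smul_dotProduct, mulVec_dotProduct_of_isSymm hL (heig j), QtwoCoeff,
    sum_div_enormFin_smul_dotProduct horthog _ (hune j), smul_eq_mul] at h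
  obtain rfl | hk1 := eq_or_ne k 1
  · simp only [↓reduceIte, OfNat.one_ne_ofNat, smul_dotProduct, zero_dotProduct, smul_eq_mul, hcube,
      Nat.cast_one] at h ⊢
    linear_combination h
  obtain rfl | hk3 := eq_or_ne k 3
  · simp only [↓reduceIte, OfNat.ofNat_ne_one, smul_dotProduct, zero_dotProduct, smul_eq_mul, hcube,
      Nat.cast_ofNat] at h ⊢
    linear_combination h
  simp only [hk1, hk3, ↓reduceIte, zero_dotProduct] at h ⊢
  linear_combination h

theorem stmt14_general (N : ℕ) (L : Matrix (Fin N) (Fin N) ℝ) (hL : L.IsSymm)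
    (ω : Fin N → ℝ)
    (hdist : ∀ i j : Fin N, i ≠ j → (ω i)^2 ≠ (ω j)^2)
    (u : Fin N → Fin N → ℝ) (hune : ∀ j, u j ≠ 0)
    (horthog : ∀ i j : Fin N, i ≠ j → ∑ l, u i l * u j l = 0)
    (heig : ∀ j, L.mulVec (u j) = (-(ω j)^2) • u j)
    (i1 : Fin N)
    (hres : ∀ k : ℕ, 2 ≤ k → ∀ j, (ω j)^2 ≠ (k : ℝ)^2 * (ω i1)^2)
    (ω2 : ℝ) (c : ℕ → Fin N → ℝ)
    (hcfin : ∀ j, (Function.support fun k => c k j).Finite)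
    (hc0 : ∀ j, c 0 j = 0)
    (heq : ∀ τ : ℝ,
      ((ω i1)^2) • deriv (deriv (Qtwo u c)) τ +
          (2 * ω i1 * ω2) • deriv (deriv (Qzero (u i1))) τ
        = L.mulVec (Qtwo u c τ) + fun l => (Qzero (u i1) τ l)^3) :
    (∀ j, j ≠ i1 →
      c 1 j = 3 * (∑ l, (u i1 l)^3 * u j l) /
        ((enormFin (u i1))^3 * enormFin (u j) * ((ω j)^2 - (ω i1)^2))) ∧
    (∀ j, c 3 j = (∑ l, (u i1 l)^3 * u j l) /
        ((enormFin (u i1))^3 * enormFin (u j) * ((ω j)^2 - 9*(ω i1)^2))) ∧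
    (∀ (k : ℕ) (j : Fin N), k ≠ 1 → k ≠ 3 → c k j = 0) := by
  have hbalance {k : ℕ} (hk0 : k ≠ 0) (j : Fin N) :=
    modal_harmonic_balance hL hune horthog heig hcfin heq hk0 j
  have hB : 0 < enormFin (u i1) := enormFin_pos (hune i1)
  refine ⟨fun j hj => ?_, fun j => ?_, fun k j hk1 hk3 => ?_⟩
  · have h := hbalance one_ne_zero j
    have hn := enormFin_pos (hune j)
    have hω : (ω j) ^ 2 - (ω i1) ^ 2 ≠ 0 := sub_ne_zero.mpr (hdist j i1 hj)
    have horth : u i1 ⬝ᵥ u j = 0 := horthog i1 j hj.symm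
    rw [eq_div_iff (by positivity)]
    simp only [↓reduceIte, OfNat.one_ne_ofNat, horth, Nat.cast_one] at h
    field_simp at h
    linear_combination h / 2
  · have h := hbalance three_ne_zero j
    have hn := enormFin_pos (hune j)
    have hω : (ω j) ^ 2 - 9 * (ω i1) ^ 2 ≠ 0 := sub_ne_zero.mpr (by
      convert hres 3 (by norm_num) j using 2; norm_num)
    rw [eq_div_iff (by positivity)]
    simp only [↓reduceIte, OfNat.ofNat_ne_one, Nat.cast_ofNat] at h
    field_simp at h
    linear_combination h / 2
  · obtain rfl | hk0 := eq_or_ne k 0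
    · exact hc0 j
    have h := hbalance hk0 j
    simpa [hk1, hk3, (enormFin_pos (hune j)).ne', sub_eq_zero, hres k (by omega) j] using h

/-- Explicit coefficients of the first correction `Q₂` in the formal expansion
`Q = ε Q₀ + ε³ Q₂ + ⋯`, `ω = ω⁽¹⁾ + ε² ω₂ + ⋯` of time-periodic solutions of
`ω² Q″ = L Q + Q∘Q∘Q` around the first linear mode `u⁽¹⁾` of a symmetric matrix `L`
with simple, non-resonant spectrum. -/
theorem stmt14 (N : ℕ) (hN : 0 < N) (L : Matrix (Fin N) (Fin N) ℝ) (hL : L.IsSymm)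
    (ω : Fin N → ℝ) (hωpos : ∀ j, 0 < ω j)
    (hdist : ∀ i j : Fin N, i ≠ j → (ω i)^2 ≠ (ω j)^2)
    (u : Fin N → Fin N → ℝ) (hune : ∀ j, u j ≠ 0)
    (horthog : ∀ i j : Fin N, i ≠ j → ∑ l, u i l * u j l = 0)
    (heig : ∀ j, L.mulVec (u j) = (-(ω j)^2) • u j)
    (i1 : Fin N) (hi1 : i1 = ⟨0, hN⟩)
    (hres : ∀ k : ℕ, 2 ≤ k → ∀ j, (ω j)^2 ≠ (k : ℝ)^2 * (ω i1)^2)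
    (ω2 : ℝ) (c : ℕ → Fin N → ℝ)
    (hcfin : ∀ j, (Function.support fun k => c k j).Finite)
    (hc0 : ∀ j, c 0 j = 0) (hc11 : c 1 i1 = 0)
    (heq : ∀ τ : ℝ,
      ((ω i1)^2) • deriv (deriv (Qtwo u c)) τ +
          (2 * ω i1 * ω2) • deriv (deriv (Qzero (u i1))) τ
        = L.mulVec (Qtwo u c τ) + fun l => (Qzero (u i1) τ l)^3) :
    (∀ j, j ≠ i1 →
      c 1 j = 3 * (∑ l, (u i1 l)^3 * u j l) /
        ((enormFin (u i1))^3 * enormFin (u j) * ((ω j)^2 - (ω i1)^2))) ∧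
    (∀ j, c 3 j = (∑ l, (u i1 l)^3 * u j l) /
        ((enormFin (u i1))^3 * enormFin (u j) * ((ω j)^2 - 9*(ω i1)^2))) ∧
    (∀ (k : ℕ) (j : Fin N), k ≠ 1 → k ≠ 3 → c k j = 0) :=
  stmt14_general N L hL ω hdist u hune horthog heig i1 hres ω2 c hcfin hc0 heq
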